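/- arXiv:1811.02311 — 8 statements merged into one kernel-verified Lean document; each statement's English description precedes it below -/
import Mathlib

section
/- In an algebra A satisfying Kramer's axioms (Ax 1)–(Ax 9), that is complete, atomic, and whose composition ; and conversion ⌣ are completely additive, if a is an atom with a⌣ ≠ 0, then a⌣ is also an atom. -/
class PerfectREL (α : Type*) [CompleteBooleanAlgebra α] [IsAtomic α] where
  comp : α → α → α
  conv : α → α
  id' : α
  ax2 : ∀ x y : α, conv (x ⊓ conv y) = conv x ⊓ y
  ax3l : ∀ x y z : α, comp (x ⊔ y) z = comp x z ⊔ comp y z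
  ax3r : ∀ x y z : α, comp x (y ⊔ z) = comp x y ⊔ comp x z
  ax4l : comp (⊤ : α) ⊥ = ⊥
  ax4r : comp (⊥ : α) ⊤ = ⊥
  ax5l : ∀ x y z : α, comp (conv x) y ⊓ z = comp (conv x) (y ⊓ comp (conv (conv x)) z) ⊓ z
  ax5r : ∀ x y z : α, comp x (conv y) ⊓ z = comp (x ⊓ comp z (conv (conv y))) (conv y) ⊓ z
  ax6l : ∀ x : α, comp id' x ≤ x
  ax6r : ∀ x : α, comp x id' ≤ x
  ax7 : comp (id' : α) id' = id'
  ax8 : comp ((conv (⊤ : α))ᶜ) ((conv (⊤ : α))ᶜ) ⊓ id' = ⊥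
  ax9a : ∀ x y z : α, comp (comp (x ⊓ id') y) z = comp (x ⊓ id') (comp y z)
  ax9b : ∀ x y z : α, comp (comp x (y ⊓ id')) z = comp x (comp (y ⊓ id') z)
  ax9c : ∀ x y z : α, comp (comp x y) (z ⊓ id') = comp x (comp y (z ⊓ id'))
  conv_sSup : ∀ S : Set α, conv (sSup S) = ⨆ x ∈ S, conv x
  comp_sSup_left : ∀ (S : Set α) (y : α), comp (sSup S) y = ⨆ x ∈ S, comp x y
  comp_sSup_right : ∀ (x : α) (S : Set α), comp x (sSup S) = ⨆ y ∈ S, comp x y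

open PerfectREL

variable {α : Type*} [CompleteBooleanAlgebra α] [IsAtomic α] [PerfectREL α]

lemma conv_bot' : conv (⊥ : α) = ⊥ := by
  have := conv_sSup (∅ : Set α)
  simpa using this

lemma conv_mono' {x y : α} (hxy : x ≤ y) : conv x ≤ conv y := by
  have h2 : sSup ({x, y} : Set α) = y := by
    rw [sSup_pair, sup_eq_right.mpr hxy]
  have h3 := conv_sSup ({x, y} : Set α)
  rw [h2] at h3
  rw [h3]
  exact le_iSup₂_of_le x (by simp) le_rfl

lemma conv_conv' (y : α) : conv (conv y) = conv (⊤ : α) ⊓ y := by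
  have := ax2 (⊤ : α) y
  simpa using this

theorem conv_isAtom (a : α) (ha : IsAtom a) (h : conv a ≠ (⊥ : α)) :
    IsAtom (conv a) := by
  constructor
  · exact h
  · intro b hb
    by_contra hbne
    have hb' : b ≤ conv a := le_of_lt hb
    have h1 : conv (conv b) = b := by
      have hble : b ≤ conv (⊤ : α) := le_trans hb' (conv_mono' le_top)
      rw [conv_conv', inf_eq_right.mpr hble]
    have hcb_ne : conv b ≠ (⊥ : α) := by
      intro hc
      apply hbne
      rw [← h1, hc, conv_bot']
    have hcba : conv b ≤ a := by
      calc conv b ≤ conv (conv a) := conv_mono' hb'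
        _ = conv (⊤ : α) ⊓ a := conv_conv' a
        _ ≤ a := inf_le_right
    have h2 : conv b = a := (ha.le_iff.mp hcba).resolve_left hcb_ne
    have h3 : b = conv a := by rw [← h1, h2]
    exact absurd h3 (ne_of_lt hb)
end

section
/- In a perfect REL-algebra, if a is an atom with a⌣ ≠ 0, then (a⌣)⌣ ≠ 0 and (a⌣)⌣ = a. -/
open PerfectREL

variable {α : Type*} [CompleteBooleanAlgebra α] [IsAtomic α] [PerfectREL α]


lemma conv_sup' (x y : α) : conv (x ⊔ y) = conv x ⊔ conv y := by
  have h := conv_sSup ({x, y} : Set α)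
  rw [sSup_pair, iSup_pair] at h
  exact h

lemma conv_le_top' (x : α) : conv x ≤ conv (⊤ : α) := by
  have : conv ((⊤ : α) ⊔ x) = conv (⊤ : α) ⊔ conv x := conv_sup' ⊤ x
  simpa using this

theorem conv_conv (a : α) (ha : IsAtom a) (h : conv a ≠ (⊥ : α)) :
    conv (conv a) ≠ (⊥ : α) ∧ conv (conv a) = a := by
  have hcc : conv (conv a) = conv (⊤ : α) ⊓ a := by
    have := ax2 (⊤ : α) a
    simpa using this
  have hle : conv (conv a) ≤ a := hcc.le.trans inf_le_right
  have hne : conv (conv a) ≠ ⊥ := by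
    intro h0
    have h1 : conv (conv (conv a)) = conv (⊤ : α) ⊓ conv a := by
      have := ax2 (⊤ : α) (conv a)
      simpa using this
    rw [h0, conv_bot'] at h1
    have : conv a = ⊥ := by
      have h2 : conv (⊤:α) ⊓ conv a = conv a := inf_eq_right.mpr (conv_le_top' a)
      rw [h2] at h1; exact h1.symm
    exact h this
  refine ⟨hne, ?_⟩
  rcases ha.le_iff.mp hle with h0 | h0
  · exact absurd h0 hne
  · exact h0
end

section
/- In a perfect REL-algebra, the map a ↦ a⌣ is injective on the set of atoms a with a⌣ ≠ 0: if a, b are atoms with a⌣ ≠ 0, b⌣ ≠ 0, and a⌣ = b⌣, then a = b. -/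
open PerfectREL

variable {α : Type*} [CompleteBooleanAlgebra α] [IsAtomic α] [PerfectREL α]

theorem conv_injective (a b : α) (ha : IsAtom a) (hb : IsAtom b)
    (ha' : conv a ≠ (⊥ : α)) (hb' : conv b ≠ (⊥ : α)) (h : conv a = conv b) :
    a = b := by
  have conv_bot : conv (⊥ : α) = ⊥ := by
    have := conv_sSup (∅ : Set α)
    simpa using this
  have h2 : ∀ x : α, conv (conv x) = conv (⊤ : α) ⊓ x := fun x => by
    have := ax2 (⊤ : α) x; simpa using this
  have h3 : ∀ x : α, conv (x ⊓ conv (⊤ : α)) = conv x := fun x => by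
    have := ax2 x (⊤ : α); simpa using this
  have key : ∀ c : α, IsAtom c → conv c ≠ (⊥ : α) → conv (conv c) = c := by
    intro c hc hc'
    have hne : conv (conv c) ≠ ⊥ := by
      intro hbot
      rw [h2] at hbot
      apply hc'
      rw [← h3 c, inf_comm, hbot, conv_bot]
    have hle : conv (conv c) ≤ c := by rw [h2]; exact inf_le_right
    rcases hc.le_iff.mp hle with h0 | h1
    · exact absurd h0 hne
    · exact h1
  calc a = conv (conv a) := (key a ha ha').symm
    _ = conv (conv b) := by rw [h]
    _ = b := key b hb hb'
end

section
/- In a perfect REL-algebra, if a is an atom with 1';a ≠ 0, then there exists a unique atom e such that e ≤ 1' and e;a = a. -/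
open PerfectREL

variable {α : Type*} [CompleteBooleanAlgebra α] [IsAtomic α] [PerfectREL α]

private lemma sSup_atoms_le' (b : α) : sSup {e : α | IsAtom e ∧ e ≤ b} = b := by
  apply le_antisymm (sSup_le fun e he => he.2)
  by_contra hlt
  have hne : b ⊓ (sSup {e : α | IsAtom e ∧ e ≤ b})ᶜ ≠ ⊥ := by
    intro hc
    exact hlt (sdiff_eq_bot_iff.mp (by rwa [sdiff_eq]))
  obtain ⟨c, hc, hcle⟩ := (IsAtomic.eq_bot_or_exists_atom_le
    (b ⊓ (sSup {e : α | IsAtom e ∧ e ≤ b})ᶜ)).resolve_left hne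
  have h1 : c ≤ sSup {e : α | IsAtom e ∧ e ≤ b} :=
    le_sSup ⟨hc, hcle.trans inf_le_left⟩
  have h2 : c ≤ (sSup {e : α | IsAtom e ∧ e ≤ b})ᶜ := hcle.trans inf_le_right
  exact hc.1 (le_bot_iff.mp (by simpa using le_inf h1 h2))

private lemma comp_mono_left {x y : α} (z : α) (hxy : x ≤ y) :
    comp x z ≤ comp y z := by
  have := ax3l x y z
  rw [sup_eq_right.mpr hxy] at this
  rw [this]; exact le_sup_left

private lemma comp_mono_right (x : α) {y z : α} (hyz : y ≤ z) :
    comp x y ≤ comp x z := by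
  have := ax3r x y z
  rw [sup_eq_right.mpr hyz] at this
  rw [this]; exact le_sup_left

private lemma comp_bot_left (x : α) : comp (⊥ : α) x = ⊥ :=
  le_bot_iff.mp ((comp_mono_right (⊥ : α) le_top).trans ax4r.le)

theorem exists_unique_S (a : α) (ha : IsAtom a) (h : comp id' a ≠ (⊥ : α)) :
    ∃! e : α, IsAtom e ∧ e ≤ id' ∧ comp e a = a := by
  -- existence
  set S : Set α := {e : α | IsAtom e ∧ e ≤ id'} with hS
  have hsup : comp id' a = ⨆ e ∈ S, comp e a := by
    have h0 : sSup S = (id' : α) := sSup_atoms_le' id'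
    rw [← h0, comp_sSup_left]
  have hid : comp id' a = a := (ha.le_iff.mp (ax6l a)).resolve_left h
  obtain ⟨e, heS, hea⟩ : ∃ e ∈ S, comp e a ≠ ⊥ := by
    by_contra hc
    push_neg at hc
    apply h
    rw [hsup]
    exact le_bot_iff.mp (iSup₂_le fun e he => (hc e he).le)
  have hle : comp e a ≤ a := (comp_mono_left a heS.2).trans hid.le
  have heq : comp e a = a := (ha.le_iff.mp hle).resolve_left hea
  refine ⟨e, ⟨heS.1, heS.2, heq⟩, ?_⟩
  rintro f ⟨hf, hfid, hfa⟩
  -- uniqueness: comp (comp f e) a = a ≠ ⊥, comp f e ≤ f ⊓ e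
  have hfe : comp (comp f e) a = a := by
    have h9 := ax9a f e a
    rw [inf_eq_left.mpr hfid] at h9
    rw [h9, heq, hfa]
  have hne : comp f e ≠ ⊥ := by
    intro hc
    rw [hc, comp_bot_left] at hfe
    exact ha.1 hfe.symm
  have h1 : comp f e ≤ f := le_trans (comp_mono_right f heS.2) (ax6r f)
  have h2 : comp f e ≤ e := le_trans (comp_mono_left e hfid) (ax6l e)
  have hfe' : comp f e = f := (hf.le_iff.mp h1).resolve_left hne
  have hfe'' : comp f e = e := (heS.1.le_iff.mp h2).resolve_left hne
  rw [← hfe', hfe'']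
end

section
/- In a perfect REL-algebra, if a is an atom with a;1' ≠ 0, then there exists a unique atom e such that e ≤ 1' and a;e = a. -/
open PerfectREL

variable {α : Type*} [CompleteBooleanAlgebra α] [IsAtomic α] [PerfectREL α]

instance CompleteBooleanAlgebra.isAtomistic_of_isAtomic {β : Type*} [CompleteBooleanAlgebra β]
    [IsAtomic β] : IsAtomistic β :=
  CompleteLattice.isAtomistic_iff.2 fun b => by
    refine ⟨{e | IsAtom e ∧ e ≤ b}, le_antisymm ?_ (sSup_le fun _ he => he.2), fun _ he => he.1⟩
    rcases eq_bot_or_exists_atom_le (b \ sSup {e | IsAtom e ∧ e ≤ b}) with hb | ⟨e, he, heb⟩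
    · exact sdiff_eq_bot_iff.1 hb
    · have he_le : e ≤ sSup {e | IsAtom e ∧ e ≤ b} := le_sSup ⟨he, heb.trans sdiff_le⟩
      exact absurd (le_bot_iff.1 ((le_inf he_le heb).trans_eq inf_sdiff_self_right)) he.1

namespace PerfectREL

theorem comp_bot_right (x : α) : comp x (⊥ : α) = ⊥ := by
  simpa using comp_sSup_right x ∅

theorem comp_mono_left {x y : α} (z : α) (h : x ≤ y) : comp x z ≤ comp y z := by
  rw [← sup_eq_right.2 h, ax3l]
  exact le_sup_left

theorem comp_mono_right (x : α) {y z : α} (h : y ≤ z) : comp x y ≤ comp x z := by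
  rw [← sup_eq_right.2 h, ax3r]
  exact le_sup_left

theorem comp_le_self_of_le_id'_left {f : α} (hf : f ≤ id') (x : α) : comp f x ≤ x :=
  (comp_mono_left x hf).trans (ax6l x)

theorem comp_le_self_of_le_id'_right {e : α} (he : e ≤ id') (x : α) : comp x e ≤ x :=
  (comp_mono_right x he).trans (ax6r x)

theorem comp_le_inf_of_le_id' {f e : α} (hf : f ≤ id') (he : e ≤ id') : comp f e ≤ f ⊓ e :=
  le_inf (comp_le_self_of_le_id'_right he f) (comp_le_self_of_le_id'_left hf e)

theorem comp_assoc_of_le_id' (x y : α) {e : α} (he : e ≤ id') :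
    comp (comp x y) e = comp x (comp y e) := by
  simpa only [inf_eq_left.2 he] using ax9c x y e

theorem exists_isAtom_le_id'_comp_ne_bot {x : α} (h : comp x id' ≠ ⊥) :
    ∃ e : α, IsAtom e ∧ e ≤ id' ∧ comp x e ≠ ⊥ := by
  by_contra! hx
  apply h
  rw [← sSup_atoms_le_eq (id' : α), comp_sSup_right, iSup₂_eq_bot]
  exact fun e he => hx e he.1 he.2

theorem comp_eq_self_of_isAtom {a e : α} (ha : IsAtom a) (he : e ≤ id') (h : comp a e ≠ ⊥) :
    comp a e = a :=
  (ha.le_iff_eq h).1 (comp_le_self_of_le_id'_right he a)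

theorem eq_of_comp_eq_self {a e f : α} (ha : a ≠ ⊥) (hf : IsAtom f) (hf_id : f ≤ id')
    (haf : comp a f = a) (he : IsAtom e) (he_id : e ≤ id') (hae : comp a e = a) : f = e := by
  have hfe : comp f e ≠ ⊥ := by
    intro h0
    apply ha
    rw [← hae, ← haf, comp_assoc_of_le_id' a f he_id, h0, comp_bot_right]
  by_contra hne
  exact hfe (le_bot_iff.1 ((hf.disjoint_of_ne he hne).eq_bot ▸ comp_le_inf_of_le_id' hf_id he_id))

end PerfectREL

theorem exists_unique_E (a : α) (ha : IsAtom a) (h : comp a id' ≠ (⊥ : α)) :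
    ∃! e : α, IsAtom e ∧ e ≤ id' ∧ comp a e = a := by
  obtain ⟨e, he, he_id, hae_ne⟩ := exists_isAtom_le_id'_comp_ne_bot h
  have hae : comp a e = a := comp_eq_self_of_isAtom ha he_id hae_ne
  refine ⟨e, ⟨he, he_id, hae⟩, ?_⟩
  rintro f ⟨hf, hf_id, haf⟩
  exact eq_of_comp_eq_self ha.1 hf hf_id haf he he_id hae
end

section
/- In a perfect REL-algebra, let a be an atom with a⌣ ≠ 0 and 1';a ≠ 0. Then Sa ≤ a;(a⌣), where Sa is the unique atom below 1' with Sa;a = a. -/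
open PerfectREL

variable {α : Type*} [CompleteBooleanAlgebra α] [IsAtomic α] [PerfectREL α]

theorem S_le_comp_conv (a sa : α) (ha : IsAtom a) (hc : conv a ≠ (⊥ : α))
    (hst : comp id' a ≠ (⊥ : α))
    (hsa : IsAtom sa) (hsa1 : sa ≤ id') (hsa2 : comp sa a = a) :
    sa ≤ comp a (conv a) := by
  -- basic facts
  have conv_bot : conv (⊥ : α) = ⊥ := by
    have h := conv_sSup (∅ : Set α)
    simpa using h
  have comp_bot : comp (⊥ : α) a = ⊥ := by
    have h := comp_sSup_left (∅ : Set α) a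
    simpa using h
  -- conv (conv a) = a
  have h1 : conv (conv a) = conv (⊤ : α) ⊓ a := by
    have h := ax2 (⊤ : α) a
    simpa using h
  have h2 : conv (conv (⊤ : α) ⊓ a) = conv a := by
    have h := ax2 a (⊤ : α)
    simpa [inf_comm] using h
  have hcc : conv (conv a) = a := by
    rcases (ha.le_iff).mp (inf_le_right : conv (⊤ : α) ⊓ a ≤ a) with h | h
    · exfalso
      apply hc
      rw [← h2, h, conv_bot]
    · rw [h1, h]
  -- key Peircean step from ax5r
  have h5 := ax5r sa (conv a) a
  rw [hcc] at h5
  rw [hsa2] at h5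
  have ha5 : a = comp (sa ⊓ comp a (conv a)) a ⊓ a := by
    simpa using h5
  have hne : sa ⊓ comp a (conv a) ≠ ⊥ := by
    intro h
    rw [h, comp_bot] at ha5
    exact ha.1 (by simpa using ha5)
  rcases (hsa.le_iff).mp (inf_le_left : sa ⊓ comp a (conv a) ≤ sa) with h | h
  · exact absurd h hne
  · rw [← h]; exact inf_le_right
end

section
/- In a perfect REL-algebra, let a be an atom with a⌣ ≠ 0 and a;1' ≠ 0. Then Ea ≤ (a⌣);a, where Ea is the unique atom below 1' with a;Ea = a. -/
open PerfectREL

variable {α : Type*} [CompleteBooleanAlgebra α] [IsAtomic α] [PerfectREL α]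

theorem E_le_conv_comp (a ea : α) (ha : IsAtom a) (hc : conv a ≠ (⊥ : α))
    (hend : comp a id' ≠ (⊥ : α))
    (hea : IsAtom ea) (hea1 : ea ≤ id') (hea2 : comp a ea = a) :
    ea ≤ comp (conv a) a := by
  have hconvbot : conv (⊥ : α) = ⊥ := by
    have := conv_sSup (∅ : Set α)
    simpa using this
  have hcompbot : ∀ x : α, comp x (⊥ : α) = ⊥ := by
    intro x
    have := comp_sSup_right x (∅ : Set α)
    simpa using this
  -- a ≤ conv ⊤
  have hle : a ≤ conv (⊤ : α) := by
    by_contra h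
    have h1 : a ⊓ conv (⊤ : α) = ⊥ := by
      rcases ha.le_iff.mp (inf_le_left : a ⊓ conv (⊤ : α) ≤ a) with h1 | h1
      · exact h1
      · exact absurd (h1 ▸ (inf_le_right : a ⊓ conv (⊤ : α) ≤ conv ⊤)) h
    have h2 : conv (a ⊓ conv (⊤ : α)) = conv a := by
      have := ax2 a (⊤ : α)
      simpa using this
    rw [h1, hconvbot] at h2
    exact hc h2.symm
  -- conv (conv a) = a
  have hcc : conv (conv a) = a := by
    have := ax2 (⊤ : α) a
    simp only [top_inf_eq] at this
    rw [this, inf_eq_right.mpr hle]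
  have h5 := ax5l (conv a) ea a
  rw [hcc] at h5
  rw [hea2, inf_idem] at h5
  -- h5 : a = comp a (ea ⊓ comp (conv a) a) ⊓ a
  by_contra hcon
  have hinf : ea ⊓ comp (conv a) a = ⊥ := by
    rcases hea.le_iff.mp (inf_le_left : ea ⊓ comp (conv a) a ≤ ea) with h1 | h1
    · exact h1
    · exact absurd (h1 ▸ (inf_le_right : ea ⊓ comp (conv a) a ≤ comp (conv a) a)) hcon
  rw [hinf, hcompbot, bot_inf_eq] at h5
  exact ha.1 h5
end

section
/- In a perfect REL-algebra, let a, b, c be atoms with a ≤ b;c and c⌣ ≠ 0. Then b ≤ a;(c⌣). -/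
open PerfectREL

variable {α : Type*} [CompleteBooleanAlgebra α] [IsAtomic α] [PerfectREL α]

theorem cycle_rotate_right (a b c : α) (ha : IsAtom a) (hb : IsAtom b) (hc : IsAtom c)
    (h : a ≤ comp b c) (hcc : conv c ≠ (⊥ : α)) :
    b ≤ comp a (conv c) := by
  have conv_bot : conv (⊥ : α) = ⊥ := by
    have := conv_sSup (∅ : Set α)
    simpa using this
  have comp_bot : ∀ y : α, comp (⊥ : α) y = ⊥ := by
    intro y
    have := comp_sSup_left (∅ : Set α) y
    simpa using this
  -- c ≤ conv ⊤
  have hconvc : conv c = conv (c ⊓ conv (⊤ : α)) := by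
    have := ax2 c (⊤ : α)
    simp at this
    exact this.symm
  have hcT : c ⊓ conv (⊤ : α) = c := by
    rcases (hc.le_iff.mp (inf_le_left : c ⊓ conv (⊤ : α) ≤ c)) with h0 | h1
    · exact absurd (hconvc.trans (by rw [h0, conv_bot])) hcc
    · exact h1
  have hcc2 : conv (conv c) = c := by
    have := ax2 (⊤ : α) c
    simp at this
    rw [this, inf_comm, hcT]
  have key := ax5r b (conv c) a
  rw [hcc2] at key
  have hla : comp b c ⊓ a = a := inf_eq_right.mpr h
  rw [hla] at key
  -- key : a = comp (b ⊓ comp a (conv c)) c ⊓ a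
  by_contra hnb
  have hb0 : b ⊓ comp a (conv c) = ⊥ := by
    rcases (hb.le_iff.mp (inf_le_left : b ⊓ comp a (conv c) ≤ b)) with h0 | h1
    · exact h0
    · exact absurd (h1 ▸ (inf_le_right : b ⊓ comp a (conv c) ≤ _)) hnb
  rw [hb0, comp_bot, bot_inf_eq] at key
  exact ha.1 key
end
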